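/- (Lemma 3 of the appendix) Assume N ≥ 3, let T be an N×N complex Hermitian matrix with T_{N−1,N−1} = 1, and let q ∈ ℂ and k, l ∈ ℝ satisfy the matrix equations J₊·T + k·(J₋·T) + l·(T·J₊) = (conj q)·T and T·J₋ + l·(J₋·T) + k·(T·J₊) = q·T. If k = 0, then q = 0. -/
import Mathlib


open Matrix

/-- Ladder coefficients c_a = √((N−1−a)(a+1)), so that c_{N−1} = 0. -/
noncomputable def spinC (N a : ℕ) : ℝ :=
  Real.sqrt (((N : ℝ) - 1 - a) * (a + 1))

/-- Raising operator J₊: (J₊)_{a+1,a} = c_a, all other entries 0. -/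
noncomputable def Jp (N : ℕ) : Matrix (Fin N) (Fin N) ℂ :=
  Matrix.of fun a b => if (a : ℕ) = (b : ℕ) + 1 then ((spinC N b : ℝ) : ℂ) else 0

/-- Lowering operator J₋ = J₊ᵀ. -/
noncomputable def Jm (N : ℕ) : Matrix (Fin N) (Fin N) ℂ := (Jp N)ᵀ

/-- J_z = diag(a − (N−1)/2). -/
noncomputable def Jz (N : ℕ) : Matrix (Fin N) (Fin N) ℂ :=
  Matrix.diagonal fun a => ((a : ℂ) - ((N : ℂ) - 1) / 2)

/-- J_x = (J₊ + J₋)/2. -/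
noncomputable def Jx (N : ℕ) : Matrix (Fin N) (Fin N) ℂ :=
  (1 / 2 : ℂ) • (Jp N + Jm N)

/-- J_y = (J₊ − J₋)/(2i). -/
noncomputable def Jy (N : ℕ) : Matrix (Fin N) (Fin N) ℂ :=
  (1 / (2 * Complex.I)) • (Jp N - Jm N)

/-- Lemma 3: if k = 0 then q = 0. -/
theorem lemma3_k_zero_imp_q_zero (N : ℕ) (hN : 3 ≤ N)
    (T : Matrix (Fin N) (Fin N) ℂ) (hT : T.IsHermitian)
    (hT1 : T ⟨N - 1, by omega⟩ ⟨N - 1, by omega⟩ = 1)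
    (q : ℂ) (k l : ℝ)
    (heq1 : Jp N * T + (k : ℂ) • (Jm N * T) + (l : ℂ) • (T * Jp N)
      = (starRingEnd ℂ q) • T)
    (heq2 : T * Jm N + (l : ℂ) • (Jm N * T) + (k : ℂ) • (T * Jp N) = q • T)
    (hk : k = 0) :
    q = 0 := by
  subst hk
  by_contra hq
  have hq' : (starRingEnd ℂ) q ≠ 0 := by
    simpa using hq
  have key : ∀ a b : Fin N,
      (∑ c, Jp N a c * T c b) + (l : ℂ) * (∑ c, T a c * Jp N c b)
        = (starRingEnd ℂ q) * T a b := by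
    intro a b
    have h := congrFun (congrFun heq1 a) b
    simpa [Matrix.mul_apply, Matrix.add_apply, Matrix.smul_apply, smul_eq_mul,
      Finset.mul_sum] using h
  have main : ∀ n : ℕ, ∀ a b : Fin N, a.1 * N + (N - 1 - b.1) = n → T a b = 0 := by
    intro n
    induction n using Nat.strong_induction_on with
    | _ n ih =>
      intro a b hn
      have hkey := key a b
      have hs1 : (∑ c, Jp N a c * T c b) = 0 := by
        rcases Nat.eq_zero_or_pos a.1 with h | h
        · apply Finset.sum_eq_zero
          intro c _
          have hne : (a : ℕ) ≠ (c : ℕ) + 1 := by omega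
          simp only [Jp, Matrix.of_apply, if_neg hne, zero_mul]
        · have ha : a.1 - 1 < N := by omega
          have hsum : (∑ c, Jp N a c * T c b)
              = Jp N a ⟨a.1 - 1, ha⟩ * T ⟨a.1 - 1, ha⟩ b := by
            apply Fintype.sum_eq_single
            intro c hc
            have hne : (a : ℕ) ≠ (c : ℕ) + 1 := by
              intro hcontra
              exact hc (Fin.ext (show (c : ℕ) = a.1 - 1 by omega))
            simp only [Jp, Matrix.of_apply, if_neg hne, zero_mul]
          rw [hsum]
          have hmlt : (a.1 - 1) * N + (N - 1 - b.1) < n := by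
            have hm : (a.1 - 1) * N + N = a.1 * N := by
              have h1 : a.1 - 1 + 1 = a.1 := Nat.succ_pred_eq_of_pos h
              calc (a.1 - 1) * N + N = (a.1 - 1 + 1) * N := (Nat.succ_mul _ _).symm
                _ = a.1 * N := by rw [h1]
            have hb : b.1 < N := b.2
            set p := (a.1 - 1) * N with hp
            set r := a.1 * N with hr
            omega
          have hz : T ⟨a.1 - 1, ha⟩ b = 0 := ih _ hmlt _ _ rfl
          rw [hz, mul_zero]
      have hs2 : (∑ c, T a c * Jp N c b) = 0 := by
        by_cases hb : b.1 + 1 < N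
        · have hsum : (∑ c, T a c * Jp N c b)
              = T a ⟨b.1 + 1, hb⟩ * Jp N ⟨b.1 + 1, hb⟩ b := by
            apply Fintype.sum_eq_single
            intro c hc
            have hne : (c : ℕ) ≠ (b : ℕ) + 1 := by
              intro hcontra
              exact hc (Fin.ext (show (c : ℕ) = b.1 + 1 by omega))
            simp only [Jp, Matrix.of_apply, if_neg hne, mul_zero]
          rw [hsum]
          have hmlt : a.1 * N + (N - 1 - (b.1 + 1)) < n := by
            set r := a.1 * N with hr
            omega
          have hz : T a ⟨b.1 + 1, hb⟩ = 0 := ih _ hmlt _ _ rfl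
          rw [hz, zero_mul]
        · apply Finset.sum_eq_zero
          intro c _
          have hne : (c : ℕ) ≠ (b : ℕ) + 1 := by
            have := c.2
            omega
          simp only [Jp, Matrix.of_apply, if_neg hne, mul_zero]
      rw [hs1, hs2] at hkey
      have hz : (starRingEnd ℂ q) * T a b = 0 := by rw [← hkey]; ring
      rcases mul_eq_zero.mp hz with h | h
      · exact absurd h hq'
      · exact h
  have hfin : T ⟨N - 1, by omega⟩ ⟨N - 1, by omega⟩ = 0 := main _ _ _ rfl
  rw [hT1] at hfin
  exact one_ne_zero hfin
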